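/- Let c = (c₁,…,c_k) be a composition of a positive integer ℓ into k ≥ 2 nonnegative parts, let I_c = { i ∈ {1,…,k} : c_i > 0 }, and for ∅ ⊊ J ⊆ I_c define the composition c(J) = (c₁(J),…,c_k(J)) by c_i(J) = c_i − 1 if i ∈ J and i−1 ∉ J, c_i(J) = c_i + 1 if i ∉ J and i−1 ∈ J, and c_i(J) = c_i otherwise, where indices are read with c₀ = c_k (i.e., i−1 ∈ J means i = 1 and k ∈ J, when i = 1). Then, as an identity of formal power series in y and q, F_c(y,q) = Σ_{∅⊊J⊆I_c} (−1)^{|J|−1} F_{c(J)}(y q^{|J|}, q)/(1 − y q^{|J|}). -/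

import Mathlib

/-
Two-variable formal power series setting: `y = X 0` and `q = X 1` are the two
variables of `MvPowerSeries (Fin 2) ℚ`, with the product (coefficient-wise)
topology used for infinite sums/products.
-/

noncomputable section

open MvPowerSeries

instance : TopologicalSpace (MvPowerSeries (Fin 2) ℚ) :=
  inferInstanceAs (TopologicalSpace ((Fin 2 →₀ ℕ) → ℚ))

/-- A cylindric partition of profile `c = (c 0, …, c (k-1))`: a `k`-tuple of
integer partitions (weakly decreasing, finitely supported sequences of
nonnegative integers), where `part i j` is the `(j+1)`-st part of the
`(i+1)`-st partition, satisfying the cyclic inequalities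
`λ^{(i)}_j ≥ λ^{(i+1)}_{j + c_{i+1}}` for `1 ≤ i ≤ k-1` and
`λ^{(k)}_j ≥ λ^{(1)}_{j + c_1}` (i.e. indices taken mod `k`). -/
structure CylindricPartition (k : ℕ) [NeZero k] (c : Fin k → ℕ) where
  part : Fin k → ℕ → ℕ
  antitone : ∀ i, Antitone (part i)
  finite_support : ∀ i, ∃ N, ∀ j, N ≤ j → part i j = 0
  cyl : ∀ (i : Fin k) (j : ℕ), part (i + 1) (j + c (i + 1)) ≤ part i j

/-- The size `|Λ|` of a cylindric partition: the sum of all its parts. -/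
def CylindricPartition.size {k : ℕ} [NeZero k] {c : Fin k → ℕ}
    (Λ : CylindricPartition k c) : ℕ :=
  ∑ᶠ (i : Fin k) (j : ℕ), Λ.part i j

/-- The largest entry `max(Λ) = max(λ^{(1)}_1, …, λ^{(k)}_1)`. -/
def CylindricPartition.max {k : ℕ} [NeZero k] {c : Fin k → ℕ}
    (Λ : CylindricPartition k c) : ℕ :=
  Finset.univ.sup fun i => Λ.part i 0

/-- The two-variable generating function `F_c(y,q) = Σ_Λ y^{max Λ} q^{|Λ|}`
over all cylindric partitions `Λ` of profile `c`, evaluated at arbitrary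
power series arguments `y` and `q`. -/
def cylGF₂ (k : ℕ) [NeZero k] (c : Fin k → ℕ) (y q : MvPowerSeries (Fin 2) ℚ) :
    MvPowerSeries (Fin 2) ℚ :=
  ∑' Λ : CylindricPartition k c, y ^ Λ.max * q ^ Λ.size

/-- The modified profile `c(J)`, where the predecessor `i - 1` is taken
cyclically in `Fin k` (so `c₀ = c_k`). -/
def profileMod (k : ℕ) [NeZero k] (c : Fin k → ℕ) (J : Finset (Fin k)) : Fin k → ℕ :=
  fun i =>
    if i ∈ J ∧ i - 1 ∉ J then c i - 1
    else if i ∉ J ∧ i - 1 ∈ J then c i + 1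
    else c i

/-!
Compare coefficients of `y^a q^n`. Expanding `1 / (1 - y q^{|J|})` as a geometric series pads
the maximum, so the `J`-th term on the right counts cylindric partitions of profile `c(J)` with
maximum at most `a` and size `n - |J| a`. Prepending a part `a` to every row in `J` turns these
bijectively into the cylindric partitions of profile `c` with maximum at most `a` and size `n`
whose rows in `J` all start with `a`: the profile `c(J)` is exactly what the interlacing
conditions become after the shift. By inclusion–exclusion over `J`, the alternating sum counts
those in which some row `i` with `c_i > 0` starts with `a`. A row with `c_i = 0` starts with at
most the first part of the previous row, so the maximum of a cylindric partition is always
attained at a row with `c_i > 0`; hence the sum counts the partitions with maximum exactly `a`.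
-/

open Finset

def bidegree (a n : ℕ) : Fin 2 →₀ ℕ := Finsupp.single 0 a + Finsupp.single 1 n

theorem bidegree_eq_iff {a n : ℕ} {e : Fin 2 →₀ ℕ} : bidegree a n = e ↔ a = e 0 ∧ n = e 1 := by
  constructor
  · rintro rfl
    simp [bidegree]
  · rintro ⟨rfl, rfl⟩
    ext i
    fin_cases i <;> simp [bidegree]

theorem X_mul_X_pow_pow_mul_X_pow (m a n : ℕ) :
    (X 0 * X 1 ^ m : MvPowerSeries (Fin 2) ℚ) ^ a * X 1 ^ n =
      monomial (bidegree a (m * a + n)) 1 := by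
  rw [mul_pow, ← pow_mul, mul_assoc, ← pow_add, X_pow_eq, X_pow_eq, monomial_mul_monomial,
    one_mul, bidegree]

section MonomialSums

variable {ι : Type*} {E : ι → Fin 2 →₀ ℕ}

theorem coeff_tsum {f : ι → MvPowerSeries (Fin 2) ℚ} (hf : Summable f) (e : Fin 2 →₀ ℕ) :
    coeff e (∑' i, f i) = ∑' i, coeff e (f i) :=
  tsum_apply hf

theorem summable_monomial_one (hE : ∀ e, {i | E i = e}.Finite) :
    Summable fun i => (monomial (E i) 1 : MvPowerSeries (Fin 2) ℚ) :=
  Pi.summable.mpr fun e => summable_of_ne_finset_zero (s := (hE e).toFinset) fun i hi =>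
    coeff_monomial_ne (Ne.symm (by simpa using hi)) 1

theorem coeff_tsum_monomial_one (hE : ∀ e, {i | E i = e}.Finite) (e : Fin 2 →₀ ℕ) :
    coeff e (∑' i, (monomial (E i) 1 : MvPowerSeries (Fin 2) ℚ)) = Nat.card {i // E i = e} := by
  classical
  rw [coeff_tsum (summable_monomial_one hE), tsum_eq_sum (s := (hE e).toFinset) fun i hi =>
      coeff_monomial_ne (Ne.symm (by simpa using hi)) 1,
    show Nat.card {i // E i = e} = _ from Nat.card_eq_card_finite_toFinset (hE e),
    card_eq_sum_ones, Nat.cast_sum]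
  exact sum_congr rfl fun i hi => by simp_all

end MonomialSums

-- The topology fixed above is definitionally `MvPowerSeries.WithPiTopology`.
instance : IsTopologicalSemiring (MvPowerSeries (Fin 2) ℚ) :=
  MvPowerSeries.WithPiTopology.instIsTopologicalSemiring _ _

instance : T2Space (MvPowerSeries (Fin 2) ℚ) :=
  MvPowerSeries.WithPiTopology.instT2Space

namespace CylindricPartition

variable {k : ℕ} [NeZero k] {c : Fin k → ℕ}

theorem ext {Λ Λ' : CylindricPartition k c} (h : Λ.part = Λ'.part) : Λ = Λ' := by
  cases Λ
  cases Λ'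
  cases h
  rfl

theorem exists_part_eq_zero (Λ : CylindricPartition k c) :
    ∃ N, ∀ i j, N ≤ j → Λ.part i j = 0 := by
  choose N hN using Λ.finite_support
  exact ⟨univ.sup N, fun i j hj => hN i j ((le_sup (mem_univ i)).trans hj)⟩

theorem sum_range_part_le_size (Λ : CylindricPartition k c) (i : Fin k) (M : ℕ) :
    ∑ j ∈ range M, Λ.part i j ≤ Λ.size := by
  obtain ⟨N, hN⟩ := Λ.exists_part_eq_zero
  have hsize : Λ.size = ∑ i, ∑ j ∈ range (N + M), Λ.part i j := by
    rw [size, finsum_eq_sum_of_fintype]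
    refine sum_congr rfl fun i _ => finsum_eq_sum_of_support_subset _ fun j hj => ?_
    by_contra hjN
    simp only [coe_range, Set.mem_Iio, not_lt] at hjN
    exact hj (hN i j (by omega))
  calc ∑ j ∈ range M, Λ.part i j ≤ ∑ j ∈ range (N + M), Λ.part i j :=
        sum_le_sum_of_subset (range_subset_range.mpr (Nat.le_add_left M N))
    _ ≤ Λ.size := hsize ▸ single_le_sum (f := fun i => ∑ j ∈ range (N + M), Λ.part i j)
          (fun i _ => Nat.zero_le _) (mem_univ i)

theorem part_le_size (Λ : CylindricPartition k c) (i : Fin k) (j : ℕ) : Λ.part i j ≤ Λ.size :=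
  (single_le_sum (fun _ _ => Nat.zero_le _) (self_mem_range_succ j)).trans
    (Λ.sum_range_part_le_size i (j + 1))

theorem lt_size_of_part_ne_zero (Λ : CylindricPartition k c) {i : Fin k} {j : ℕ}
    (h : Λ.part i j ≠ 0) : j < Λ.size := by
  have hpos : ∀ j' ∈ range (j + 1), 1 ≤ Λ.part i j' := fun j' hj' =>
    (Nat.one_le_iff_ne_zero.mpr h).trans (Λ.antitone i (Nat.lt_succ_iff.mp (mem_range.mp hj')))
  have := (card_nsmul_le_sum _ _ _ hpos).trans (Λ.sum_range_part_le_size i (j + 1))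
  simp only [card_range, smul_eq_mul, mul_one] at this
  omega

theorem finite_setOf_size_le (n : ℕ) : {Λ : CylindricPartition k c | Λ.size ≤ n}.Finite := by
  let trunc (Λ : CylindricPartition k c) : Fin k → Fin (n + 1) → ℕ := fun i j => Λ.part i j
  refine Set.Finite.of_finite_image (f := trunc) ?_ fun Λ hΛ Λ' hΛ' h => ext ?_
  · refine (Set.Finite.pi fun _ => Set.Finite.pi fun _ => Set.finite_Iic n).subset ?_
    rintro _ ⟨Λ, hΛ, rfl⟩
    exact Set.mem_univ_pi.mpr fun i => Set.mem_univ_pi.mpr fun j =>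
      (Λ.part_le_size i j).trans hΛ
  · funext i j
    by_cases hj : j ≤ n
    · exact congrFun (congrFun h i) ⟨j, Nat.lt_succ_of_le hj⟩
    · have vanish : ∀ Λ : CylindricPartition k c, Λ.size ≤ n → Λ.part i j = 0 := fun Λ hΛ =>
        by_contra fun hne => hj ((Λ.lt_size_of_part_ne_zero hne).le.trans hΛ)
      rw [vanish Λ hΛ, vanish Λ' hΛ']

theorem part_zero_le_max (Λ : CylindricPartition k c) (i : Fin k) : Λ.part i 0 ≤ Λ.max :=
  le_sup (f := fun i => Λ.part i 0) (mem_univ i)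

theorem max_le_iff {Λ : CylindricPartition k c} {a : ℕ} : Λ.max ≤ a ↔ ∀ i, Λ.part i 0 ≤ a := by
  simp [max]

theorem part_le_of_max_le {Λ : CylindricPartition k c} {a : ℕ} (h : Λ.max ≤ a) (i : Fin k)
    (j : ℕ) : Λ.part i j ≤ a :=
  (Λ.antitone i (Nat.zero_le j)).trans ((Λ.part_zero_le_max i).trans h)

theorem exists_part_zero_eq_max (Λ : CylindricPartition k c) : ∃ i, Λ.part i 0 = Λ.max := by
  obtain ⟨i, -, hi⟩ := exists_mem_eq_sup univ univ_nonempty fun i => Λ.part i 0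
  exact ⟨i, hi.symm⟩

end CylindricPartition

section RowShift

variable {k : ℕ} {c : Fin k → ℕ} {J : Finset (Fin k)}

def rowShift (J : Finset (Fin k)) (i : Fin k) : ℕ := if i ∈ J then 1 else 0

theorem rowShift_le_one (i : Fin k) : rowShift J i ≤ 1 := by
  unfold rowShift
  split_ifs <;> omega

theorem rowShift_le (hJ : ∀ i ∈ J, 0 < c i) (i : Fin k) : rowShift J i ≤ c i := by
  unfold rowShift
  split_ifs with hi
  · exact hJ i hi
  · exact Nat.zero_le _

theorem sum_rowShift : ∑ i, rowShift J i = #J := by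
  simp [rowShift]

theorem profileMod_add_rowShift [NeZero k] (hJ : ∀ i ∈ J, 0 < c i) (i : Fin k) :
    profileMod k c J i + rowShift J i = c i + rowShift J (i - 1) := by
  have := rowShift_le hJ i
  grind [profileMod, rowShift]

end RowShift

theorem finsum_ite_lt_sub (s a : ℕ) {f : ℕ → ℕ} {N : ℕ} (hf : ∀ j, N ≤ j → f j = 0) :
    ∑ᶠ j, (if j < s then a else f (j - s)) = s * a + ∑ᶠ j, f j := by
  rw [finsum_eq_sum_of_support_subset (s := range (s + N)) _ fun j hj => ?_,
    finsum_eq_sum_of_support_subset (s := range N) _ fun j hj => ?_, sum_range_add,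
    sum_congr rfl fun j hj => if_pos (mem_range.mp hj)]
  · simp
  · by_contra hjN
    simp only [coe_range, Set.mem_Iio, not_lt] at hjN
    exact hj (hf j hjN)
  · by_contra hjN
    simp only [coe_range, Set.mem_Iio, not_lt] at hjN
    simp only [Function.mem_support, ne_eq] at hj
    rw [if_neg (by omega), hf _ (by omega)] at hj
    exact hj rfl

namespace CylindricPartition

variable {k : ℕ} [NeZero k] {c : Fin k → ℕ} {J : Finset (Fin k)}

def dropHeads (hJ : ∀ i ∈ J, 0 < c i) (Λ : CylindricPartition k c) :
    CylindricPartition k (profileMod k c J) where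
  part i j := Λ.part i (j + rowShift J i)
  antitone i _ _ h := Λ.antitone i (by omega)
  finite_support i := by
    obtain ⟨N, hN⟩ := Λ.finite_support i
    exact ⟨N, fun j hj => hN _ (by omega)⟩
  cyl i j := by
    have := profileMod_add_rowShift hJ (i + 1)
    rw [add_sub_cancel_right] at this
    convert Λ.cyl i (j + rowShift J i) using 2
    omega

def consHeads (hJ : ∀ i ∈ J, 0 < c i) (a : ℕ) (Λ : CylindricPartition k (profileMod k c J))
    (ha : Λ.max ≤ a) : CylindricPartition k c where
  part i j := if j < rowShift J i then a else Λ.part i (j - rowShift J i)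
  antitone i j j' h := by
    dsimp only
    split_ifs
    · exact le_rfl
    · omega
    · exact part_le_of_max_le ha _ _
    · exact Λ.antitone i (by omega)
  finite_support i := by
    obtain ⟨N, hN⟩ := Λ.finite_support i
    refine ⟨N + 1, fun j hj => ?_⟩
    have := rowShift_le_one (J := J) i
    rw [if_neg (by omega)]
    exact hN _ (by omega)
  cyl i j := by
    have hmod := profileMod_add_rowShift hJ (i + 1)
    rw [add_sub_cancel_right] at hmod
    have := rowShift_le hJ (i + 1)
    split_ifs
    · exact le_rfl
    · omega
    · exact part_le_of_max_le ha _ _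
    · convert Λ.cyl i (j - rowShift J i) using 2
      omega

theorem consHeads_part_le (hJ : ∀ i ∈ J, 0 < c i) (a : ℕ)
    (Λ : CylindricPartition k (profileMod k c J)) (ha : Λ.max ≤ a) (i : Fin k) (j : ℕ) :
    (consHeads hJ a Λ ha).part i j ≤ a := by
  dsimp only [consHeads]
  split_ifs
  · exact le_rfl
  · exact part_le_of_max_le ha _ _

theorem size_consHeads (hJ : ∀ i ∈ J, 0 < c i) (a : ℕ)
    (Λ : CylindricPartition k (profileMod k c J)) (ha : Λ.max ≤ a) :
    (consHeads hJ a Λ ha).size = #J * a + Λ.size := by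
  obtain ⟨N, hN⟩ := Λ.exists_part_eq_zero
  simp only [size, consHeads, finsum_eq_sum_of_fintype, finsum_ite_lt_sub _ a (hN _),
    sum_add_distrib, ← sum_mul, sum_rowShift]

theorem dropHeads_consHeads (hJ : ∀ i ∈ J, 0 < c i) (a : ℕ)
    (Λ : CylindricPartition k (profileMod k c J)) (ha : Λ.max ≤ a) :
    dropHeads hJ (consHeads hJ a Λ ha) = Λ :=
  ext <| funext fun i => funext fun j => by simp [dropHeads, consHeads]

theorem consHeads_dropHeads (hJ : ∀ i ∈ J, 0 < c i) {a : ℕ} (Λ : CylindricPartition k c)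
    (ha : (dropHeads hJ Λ).max ≤ a) (hhead : ∀ i ∈ J, Λ.part i 0 = a) :
    consHeads hJ a (dropHeads hJ Λ) ha = Λ := by
  refine ext <| funext fun i => funext fun j => ?_
  simp only [consHeads, dropHeads]
  split_ifs with hj
  · have hi : i ∈ J := by by_contra hi; simp [rowShift, hi] at hj
    have := rowShift_le_one (J := J) i
    obtain rfl : j = 0 := by omega
    exact (hhead i hi).symm
  · rw [Nat.sub_add_cancel (by omega)]

theorem max_dropHeads_le (hJ : ∀ i ∈ J, 0 < c i) (Λ : CylindricPartition k c) :
    (dropHeads hJ Λ).max ≤ Λ.max :=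
  max_le_iff.mpr fun i => part_le_of_max_le (le_refl Λ.max) i _

def consHeadsEquiv (hJ : ∀ i ∈ J, 0 < c i) (a n : ℕ) :
    {Λ : CylindricPartition k (profileMod k c J) // Λ.max ≤ a ∧ #J * a + Λ.size = n} ≃
      {Λ : CylindricPartition k c // Λ.max ≤ a ∧ Λ.size = n ∧ ∀ i ∈ J, Λ.part i 0 = a} where
  toFun Λ := ⟨consHeads hJ a Λ.1 Λ.2.1,
    max_le_iff.mpr fun i => consHeads_part_le hJ a _ _ i 0,
    (size_consHeads hJ a _ _).trans Λ.2.2,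
    fun i hi => by simp [consHeads, rowShift, hi]⟩
  invFun Λ := ⟨dropHeads hJ Λ.1, (max_dropHeads_le hJ Λ.1).trans Λ.2.1, by
    rw [← size_consHeads hJ a _ ((max_dropHeads_le hJ Λ.1).trans Λ.2.1),
      consHeads_dropHeads hJ Λ.1 ((max_dropHeads_le hJ Λ.1).trans Λ.2.1) Λ.2.2.2, Λ.2.2.1]⟩
  left_inv Λ := Subtype.ext (dropHeads_consHeads hJ a Λ.1 Λ.2.1)
  right_inv Λ :=
    Subtype.ext (consHeads_dropHeads hJ Λ.1 ((max_dropHeads_le hJ Λ.1).trans Λ.2.1) Λ.2.2.2)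

end CylindricPartition

section InclusionExclusion

variable {α ι : Type*}

theorem natCard_subtype_eq_card_filter (U : Finset α) {p q : α → Prop} [DecidablePred q]
    (h : ∀ x, p x ↔ x ∈ U ∧ q x) : Nat.card {x // p x} = #(U.filter q) := by
  rw [← Nat.card_eq_finsetCard]
  exact Nat.card_congr (Equiv.subtypeEquivRight fun x => by simp [h])

theorem card_filter_exists_eq_sum_powerset [DecidableEq α] [DecidableEq ι] (U : Finset α)
    (s : Finset ι) (P : ι → α → Prop) [∀ i, DecidablePred (P i)] :
    (#(U.filter fun x => ∃ i ∈ s, P i x) : ℤ) =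
      ∑ J ∈ s.powerset.erase ∅, (-1 : ℤ) ^ (#J - 1) * #(U.filter fun x => ∀ i ∈ J, P i x) := by
  have hunion : s.biUnion (fun i => U.filter (P i)) = U.filter fun x => ∃ i ∈ s, P i x := by
    ext x
    simp only [mem_biUnion, mem_filter]
    tauto
  have hinter (J : Finset ι) (hJ : J.Nonempty) :
      J.inf' hJ (fun i => U.filter (P i)) = U.filter fun x => ∀ i ∈ J, P i x := by
    ext x
    rw [mem_inf']
    simp only [mem_filter]
    obtain ⟨j, hj⟩ := hJ
    exact ⟨fun h => ⟨(h j hj).1, fun i hi => (h i hi).2⟩, fun h i hi => ⟨h.1, h.2 i hi⟩⟩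
  rw [← hunion, inclusion_exclusion_card_biUnion]
  calc _ = ∑ J : s.powerset.filter (·.Nonempty),
        (-1 : ℤ) ^ (#J.1 + 1) * #(U.filter fun x => ∀ i ∈ J.1, P i x) :=
        sum_congr rfl fun J _ => by rw [hinter]
    _ = ∑ J ∈ s.powerset.filter (·.Nonempty),
        (-1 : ℤ) ^ (#J + 1) * #(U.filter fun x => ∀ i ∈ J, P i x) :=
        sum_coe_sort (s.powerset.filter (·.Nonempty)) fun J =>
          (-1 : ℤ) ^ (#J + 1) * #(U.filter fun x => ∀ i ∈ J, P i x)
    _ = _ := by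
      refine sum_congr (by ext J; simp [nonempty_iff_ne_empty, and_comm]) fun J hJ => ?_
      have hJ : 1 ≤ #J := card_pos.mpr (nonempty_iff_ne_empty.mpr (mem_erase.mp hJ).1)
      rw [show #J + 1 = #J - 1 + 2 by omega, pow_add]
      simp

end InclusionExclusion

namespace CylindricPartition

variable {k : ℕ} [NeZero k] {c : Fin k → ℕ}

open Fin.NatCast in
theorem exists_pos_part_zero_eq_max (Λ : CylindricPartition k c) (hc : 0 < ∑ i, c i) :
    ∃ i, 0 < c i ∧ Λ.part i 0 = Λ.max := by
  by_contra! h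
  have step (i : Fin k) (hi : Λ.part i 0 = Λ.max) : Λ.part (i - 1) 0 = Λ.max := by
    have hci : c i = 0 := Nat.eq_zero_of_not_pos fun hpos => h i hpos hi
    have := Λ.cyl (i - 1) 0
    rw [sub_add_cancel, hci, zero_add, hi] at this
    exact le_antisymm (Λ.part_zero_le_max _) this
  obtain ⟨i₀, hi₀⟩ := Λ.exists_part_zero_eq_max
  have all (m : ℕ) : Λ.part (i₀ - m) 0 = Λ.max := by
    induction m with
    | zero => simpa using hi₀
    | succ m ih => simpa [sub_sub] using step _ ih
  have : ∀ i, c i = 0 := fun i => Nat.eq_zero_of_not_pos fun hpos =>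
    h i hpos (by simpa using all (i₀ - i).val)
  simp [this] at hc

theorem card_max_eq_sum_powerset (hc : 0 < ∑ i, c i) (a n : ℕ) :
    (Nat.card {Λ : CylindricPartition k c // Λ.max = a ∧ Λ.size = n} : ℤ) =
      ∑ J ∈ (univ.filter fun i => 0 < c i).powerset.erase ∅, (-1) ^ (#J - 1) *
        (Nat.card {Λ : CylindricPartition k c //
          Λ.max ≤ a ∧ Λ.size = n ∧ ∀ i ∈ J, Λ.part i 0 = a} : ℤ) := by
  let _ : DecidableEq (CylindricPartition k c) := Classical.decEq _
  have hU : {Λ : CylindricPartition k c | Λ.max ≤ a ∧ Λ.size = n}.Finite :=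
    (finite_setOf_size_le n).subset fun Λ h => h.2.le
  have hmem (Λ) : Λ ∈ hU.toFinset ↔ Λ.max ≤ a ∧ Λ.size = n := hU.mem_toFinset
  have hmax (Λ : CylindricPartition k c) (ha : Λ.max ≤ a) :
      Λ.max = a ↔ ∃ i ∈ univ.filter fun i => 0 < c i, Λ.part i 0 = a := by
    simp only [mem_filter, mem_univ, true_and]
    refine ⟨fun h => h ▸ Λ.exists_pos_part_zero_eq_max hc, fun ⟨i, _, hi⟩ => ?_⟩
    exact le_antisymm ha (hi ▸ Λ.part_zero_le_max i)
  rw [natCard_subtype_eq_card_filter hU.toFinset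
      (q := fun Λ => ∃ i ∈ univ.filter fun i => 0 < c i, Λ.part i 0 = a) fun Λ => ?_]
  · convert card_filter_exists_eq_sum_powerset hU.toFinset _ (fun i Λ => Λ.part i 0 = a)
      using 4 with J
    convert natCard_subtype_eq_card_filter hU.toFinset fun Λ => by rw [hmem, and_assoc]
  · rw [hmem]
    constructor
    · rintro ⟨rfl, hsize⟩
      exact ⟨⟨le_rfl, hsize⟩, (hmax Λ le_rfl).mp rfl⟩
    · rintro ⟨⟨ha, hsize⟩, hi⟩
      exact ⟨(hmax Λ ha).mpr hi, hsize⟩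

variable (c) (m : ℕ)

theorem finite_setOf_bidegree_eq (e : Fin 2 →₀ ℕ) :
    {Λ : CylindricPartition k c | bidegree Λ.max (m * Λ.max + Λ.size) = e}.Finite :=
  (finite_setOf_size_le (e 1)).subset fun Λ h => by
    rw [Set.mem_ofPred_eq, bidegree_eq_iff] at h
    simp only [Set.mem_ofPred_eq]
    omega

theorem finite_setOf_bidegree_add_eq (e : Fin 2 →₀ ℕ) :
    {p : CylindricPartition k c × ℕ |
      bidegree (p.1.max + p.2) (m * (p.1.max + p.2) + p.1.size) = e}.Finite :=
  ((finite_setOf_size_le (e 1)).prod (Set.finite_Iic (e 0))).subset fun p h => by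
    rw [Set.mem_ofPred_eq, bidegree_eq_iff] at h
    simp only [Set.mem_prod, Set.mem_ofPred_eq, Set.mem_Iic]
    omega

end CylindricPartition

def Equiv.prodNatEquivSum (P : Type*) : P × ℕ ≃ P ⊕ P × ℕ where
  toFun
    | (x, 0) => .inl x
    | (x, b + 1) => .inr (x, b)
  invFun
    | .inl x => (x, 0)
    | .inr (x, b) => (x, b + 1)
  left_inv
    | (_, 0) => rfl
    | (_, _ + 1) => rfl
  right_inv
    | .inl _ => rfl
    | .inr _ => rfl

section GeneratingFunction

open CylindricPartition

variable {k : ℕ} [NeZero k]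

theorem cylGF₂_X_mul_X_pow (c : Fin k → ℕ) (m : ℕ) :
    cylGF₂ k c (X 0 * X 1 ^ m) (X 1) =
      ∑' Λ : CylindricPartition k c, monomial (bidegree Λ.max (m * Λ.max + Λ.size)) 1 :=
  tsum_congr fun Λ => X_mul_X_pow_pow_mul_X_pow m Λ.max Λ.size

theorem coeff_cylGF₂ (c : Fin k → ℕ) (e : Fin 2 →₀ ℕ) :
    coeff e (cylGF₂ k c (X 0) (X 1)) =
      Nat.card {Λ : CylindricPartition k c // Λ.max = e 0 ∧ Λ.size = e 1} := by
  have := cylGF₂_X_mul_X_pow c 0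
  rw [pow_zero, mul_one] at this
  rw [this, coeff_tsum_monomial_one (finite_setOf_bidegree_eq c 0)]
  simp only [zero_mul, zero_add, bidegree_eq_iff]

/-- The terms of `F_c(u, q) / (1 - u) = ∑_{Λ, b} u ^ (max Λ + b) q ^ |Λ|` for `u = y q ^ m`. -/
def paddedTerm (c : Fin k → ℕ) (m : ℕ) (p : CylindricPartition k c × ℕ) :
    MvPowerSeries (Fin 2) ℚ :=
  (X 0 * X 1 ^ m) ^ (p.1.max + p.2) * X 1 ^ p.1.size

theorem paddedTerm_eq_monomial (c : Fin k → ℕ) (m : ℕ) (p : CylindricPartition k c × ℕ) :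
    paddedTerm c m p = monomial (bidegree (p.1.max + p.2) (m * (p.1.max + p.2) + p.1.size)) 1 :=
  X_mul_X_pow_pow_mul_X_pow _ _ _

theorem summable_paddedTerm (c : Fin k → ℕ) (m : ℕ) : Summable (paddedTerm c m) := by
  rw [funext (paddedTerm_eq_monomial c m)]
  exact summable_monomial_one (finite_setOf_bidegree_add_eq c m)

theorem hasSum_paddedTerm_zero (c : Fin k → ℕ) (m : ℕ) :
    HasSum (fun Λ => paddedTerm c m (Λ, 0)) (cylGF₂ k c (X 0 * X 1 ^ m) (X 1)) := by
  simp only [paddedTerm, add_zero, cylGF₂]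
  refine Summable.hasSum ?_
  simpa only [X_mul_X_pow_pow_mul_X_pow] using summable_monomial_one (finite_setOf_bidegree_eq c m)

theorem paddedTerm_succ (c : Fin k → ℕ) (m : ℕ) (Λ : CylindricPartition k c) (b : ℕ) :
    paddedTerm c m (Λ, b + 1) = paddedTerm c m (Λ, b) * (X 0 * X 1 ^ m) := by
  simp only [paddedTerm]
  ring

theorem tsum_paddedTerm (c : Fin k → ℕ) (m : ℕ) :
    ∑' p, paddedTerm c m p =
      cylGF₂ k c (X 0 * X 1 ^ m) (X 1) + (∑' p, paddedTerm c m p) * (X 0 * X 1 ^ m) := by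
  have hshift : HasSum (fun p : CylindricPartition k c × ℕ => paddedTerm c m (p.1, p.2 + 1))
      ((∑' p, paddedTerm c m p) * (X 0 * X 1 ^ m)) := by
    simpa only [paddedTerm_succ] using (summable_paddedTerm c m).hasSum.mul_right _
  exact ((Equiv.prodNatEquivSum _).symm.hasSum_iff.mp
    (HasSum.sum (f := paddedTerm c m ∘ (Equiv.prodNatEquivSum _).symm)
      (hasSum_paddedTerm_zero c m) hshift)).tsum_eq

theorem cylGF₂_mul_inv_one_sub (c : Fin k → ℕ) (m : ℕ) :
    cylGF₂ k c (X 0 * X 1 ^ m) (X 1) * (1 - X 0 * X 1 ^ m)⁻¹ = ∑' p, paddedTerm c m p := by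
  symm
  rw [MvPowerSeries.eq_mul_inv_iff_mul_eq, mul_one_sub, sub_eq_iff_eq_add, ← tsum_paddedTerm]
  simp

theorem coeff_tsum_paddedTerm (c : Fin k → ℕ) (m : ℕ) (e : Fin 2 →₀ ℕ) :
    coeff e (∑' p, paddedTerm c m p) =
      Nat.card {Λ : CylindricPartition k c // Λ.max ≤ e 0 ∧ m * e 0 + Λ.size = e 1} := by
  rw [funext (paddedTerm_eq_monomial c m),
    coeff_tsum_monomial_one (finite_setOf_bidegree_add_eq c m)]
  congr 1
  refine Nat.card_congr
    { toFun := fun p => ⟨p.1.1, ?_⟩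
      invFun := fun Λ => ⟨(Λ.1, e 0 - Λ.1.max), ?_⟩
      left_inv := fun p => ?_
      right_inv := fun Λ => rfl }
  · obtain ⟨h0, h1⟩ := bidegree_eq_iff.mp p.2
    exact ⟨by omega, h0 ▸ h1⟩
  · rw [Nat.add_sub_cancel' Λ.2.1]
    exact bidegree_eq_iff.mpr ⟨rfl, Λ.2.2⟩
  · obtain ⟨h0, -⟩ := bidegree_eq_iff.mp p.2
    exact Subtype.ext (Prod.ext rfl (by simp only; omega))

theorem coeff_cylGF₂_profileMod_mul_inv {c : Fin k → ℕ} {J : Finset (Fin k)}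
    (hJ : ∀ i ∈ J, 0 < c i) (e : Fin 2 →₀ ℕ) :
    coeff e (cylGF₂ k (profileMod k c J) (X 0 * X 1 ^ #J) (X 1) * (1 - X 0 * X 1 ^ #J)⁻¹) =
      (Nat.card {Λ : CylindricPartition k c //
        Λ.max ≤ e 0 ∧ Λ.size = e 1 ∧ ∀ i ∈ J, Λ.part i 0 = e 0} : ℚ) := by
  rw [cylGF₂_mul_inv_one_sub, coeff_tsum_paddedTerm, Nat.card_congr (consHeadsEquiv hJ _ _)]

end GeneratingFunction

theorem cylGF_functional_equation (k : ℕ) (hk : 2 ≤ k) (c : Fin k → ℕ)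
    (hℓ : 0 < ∑ i, c i) :
    haveI : NeZero k := ⟨by omega⟩
    cylGF₂ k c (X 0) (X 1) =
      ∑ J ∈ ((Finset.univ.filter fun i : Fin k => 0 < c i).powerset.erase ∅),
        (-1 : MvPowerSeries (Fin 2) ℚ) ^ (J.card - 1) *
          cylGF₂ k (profileMod k c J) (X 0 * X 1 ^ J.card) (X 1) *
          (1 - X 0 * X 1 ^ J.card)⁻¹ := by
  have : NeZero k := ⟨by omega⟩
  ext e
  rw [coeff_cylGF₂, map_sum]
  have count := congrArg (Int.cast : ℤ → ℚ)
    (CylindricPartition.card_max_eq_sum_powerset hℓ (e 0) (e 1))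
  push_cast at count
  rw [count]
  refine sum_congr rfl fun J hJ => ?_
  have hJc (i : Fin k) (hi : i ∈ J) : 0 < c i := by
    simpa using mem_powerset.mp (mem_erase.mp hJ).2 hi
  rw [mul_assoc, show (-1 : MvPowerSeries (Fin 2) ℚ) ^ (#J - 1) = C ((-1) ^ (#J - 1)) by simp,
    coeff_C_mul, coeff_cylGF₂_profileMod_mul_inv hJc]
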